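/- (Second outer recurrence.) For integers m, n, k with m, n ≥ 1 and 1 ≤ k ≤ min(m, n−1), and integers i, j with 1 ≤ i ≤ m, 0 ≤ j ≤ n and k ≤ i+j ≤ m+n−k, one has c_{m,n,k}(i, j) = c_{m,n−1,k}(i, j) − c_{m−1,n−1,k−1}(i−1, j). -/
import Mathlib


/-- Binomial coefficient for integer arguments: `C a b = a.choose b` when
`0 ≤ b ≤ a`, and `0` otherwise. -/
def C (a b : ℤ) : ℤ := if 0 ≤ b ∧ b ≤ a then (a.toNat.choose b.toNat : ℤ) else 0

/-- The coordinate function `c_{m,n,k}(i,j)`. -/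
def c (m n k i j : ℤ) : ℤ :=
  ∑ l ∈ Finset.range (k.toNat + 1),
    (-1 : ℤ) ^ l * C (i + j - k) (i - l) * C (m - l) (k - l) * C (n - k + l) l

lemma C_neg (a b : ℤ) (hb : b < 0) : C a b = 0 := by
  simp only [C, if_neg (by omega : ¬(0 ≤ b ∧ b ≤ a))]

lemma C_natCast (p q : ℕ) : C (p : ℤ) (q : ℤ) = (p.choose q : ℤ) := by
  unfold C
  split_ifs with h
  · simp
  · push_neg at h
    have hq : (p : ℤ) < q := h (by positivity)
    rw [Nat.choose_eq_zero_of_lt (by exact_mod_cast hq)]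
    simp

lemma C_pascal (a b : ℤ) (ha : 1 ≤ a) : C a b = C (a - 1) b + C (a - 1) (b - 1) := by
  obtain ⟨p, rfl⟩ : ∃ p : ℕ, a = (p : ℤ) + 1 := ⟨(a - 1).toNat, by omega⟩
  rcases lt_or_ge b 0 with hb | hb
  · rw [C_neg _ _ hb, C_neg _ _ hb, C_neg _ _ (by omega)]
    simp
  · obtain ⟨q, rfl⟩ : ∃ q : ℕ, b = (q : ℤ) := ⟨b.toNat, by omega⟩
    have h1 : (p : ℤ) + 1 = ((p + 1 : ℕ) : ℤ) := by push_cast; ring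
    have h2 : (p : ℤ) + 1 - 1 = ((p : ℕ) : ℤ) := by push_cast; ring
    rw [h2, h1, C_natCast]
    cases q with
    | zero =>
      simp only [Nat.cast_zero, zero_sub, C_neg _ (-1) (by norm_num : (-1:ℤ) < 0), add_zero]
      rw [show (0:ℤ) = ((0:ℕ):ℤ) by norm_num, C_natCast]
      simp
    | succ r =>
      have h3 : ((r + 1 : ℕ) : ℤ) - 1 = ((r : ℕ) : ℤ) := by push_cast; ring
      rw [h3, C_natCast, C_natCast, Nat.choose_succ_succ (p) r]
      push_cast; ring

theorem outer_recurrence_second (m n k i j : ℤ)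
    (hm : 1 ≤ m) (hn : 1 ≤ n) (hk1 : 1 ≤ k) (hkm : k ≤ m) (hkn : k ≤ n - 1)
    (hi1 : 1 ≤ i) (him : i ≤ m) (hj0 : 0 ≤ j) (hjn : j ≤ n)
    (hij1 : k ≤ i + j) (hij2 : i + j ≤ m + n - k) :
    c m n k i j = c m (n - 1) k i j - c (m - 1) (n - 1) (k - 1) (i - 1) j := by
  unfold c
  have hK : k.toNat + 1 = ((k - 1).toNat + 1) + 1 := by omega
  have main :
      (∑ l ∈ Finset.range (k.toNat + 1),
        ((-1 : ℤ) ^ l * C (i + j - k) (i - l) * C (m - l) (k - l) * C (n - k + l) l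
          - (-1 : ℤ) ^ l * C (i + j - k) (i - l) * C (m - l) (k - l) * C (n - 1 - k + l) l))
      = ∑ l ∈ Finset.range (k.toNat + 1),
          (-1 : ℤ) ^ l * C (i + j - k) (i - l) * C (m - l) (k - l)
            * C (n - 1 - k + l) (l - 1) := by
    refine Finset.sum_congr rfl fun l _ => ?_
    have h1 : (1 : ℤ) ≤ n - k + l := by
      have : (0 : ℤ) ≤ (l : ℤ) := Int.natCast_nonneg l
      omega
    rw [C_pascal _ _ h1]
    have h2 : n - k + (l : ℤ) - 1 = n - 1 - k + l := by ring
    rw [h2]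
    ring
  have main2 :
      (∑ l ∈ Finset.range (k.toNat + 1),
        (-1 : ℤ) ^ l * C (i + j - k) (i - l) * C (m - l) (k - l) * C (n - 1 - k + l) (l - 1))
      = -(∑ l ∈ Finset.range ((k - 1).toNat + 1),
          (-1 : ℤ) ^ l * C (i - 1 + j - (k - 1)) (i - 1 - l) * C (m - 1 - l) (k - 1 - l)
            * C (n - 1 - (k - 1) + l) l) := by
    rw [hK, Finset.sum_range_succ']
    have h0 : (-1 : ℤ) ^ 0 * C (i + j - k) (i - (0:ℕ)) * C (m - (0:ℕ)) (k - (0:ℕ))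
        * C (n - 1 - k + (0:ℕ)) ((0:ℕ) - 1) = 0 := by
      push_cast
      rw [C_neg _ (-1) (by norm_num)]
      ring
    rw [h0, add_zero, ← Finset.sum_neg_distrib]
    refine Finset.sum_congr rfl fun l _ => ?_
    have e1 : i - ((l : ℤ) + 1) = i - 1 - l := by ring
    have e2 : m - ((l : ℤ) + 1) = m - 1 - l := by ring
    have e3 : k - ((l : ℤ) + 1) = k - 1 - l := by ring
    have e4 : n - 1 - k + ((l : ℤ) + 1) - 1 = n - 1 - (k - 1) + l - 1 + 1 - 1 := by ring
    have e5 : i + j - k = i - 1 + j - (k - 1) := by ring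
    push_cast
    rw [e1, e2, e3, e5]
    have e6 : n - 1 - k + ((l : ℤ) + 1) = n - 1 - (k - 1) + l := by ring
    have e7 : (l : ℤ) + 1 - 1 = l := by ring
    rw [e6, e7]
    ring
  rw [Finset.sum_sub_distrib] at main
  linarith [main, main2]
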